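/- arXiv:1611.08120 — 2 statements merged into one kernel-verified Lean document; each statement's English description precedes it below -/
import Mathlib

section
/- Let p be an odd prime such that the Pisano period l_p equals 2p+2 and β(p) ∈ {2, 4}. Then the cyclic code C = ⟨f(x)⟩ of length 2p+2 over F_p generated by the Fibonacci polynomial f(x) has F_p-dimension 2 and minimum Hamming distance 2p+2−β(p), i.e. C is a linear code of type [2p+2, 2, 2p+2−β(p)] over F_p. -/
open Polynomial

/-- The Fibonacci sequence over `ZMod p`: `F 0 = 0`, `F 1 = 1`, `F (n+2) = F (n+1) + F n`. -/
def fibMod (p : ℕ) : ℕ → ZMod p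
  | 0 => 0
  | 1 => 1
  | n + 2 => fibMod p (n + 1) + fibMod p n

/-- The Pisano period of `p`: the least `t > 0` with `F t = F 0 = 0` and `F (t+1) = F 1 = 1`. -/
noncomputable def pisano (p : ℕ) : ℕ :=
  sInf {t : ℕ | 0 < t ∧ fibMod p t = 0 ∧ fibMod p (t + 1) = 1}

/-- `β(p)`: the number of indices `0 ≤ i < l_p` with `F i = 0` in `ZMod p`. -/
noncomputable def betaP (p : ℕ) : ℕ :=
  ((Finset.range (pisano p)).filter fun i => fibMod p i = 0).card

/-- The Fibonacci polynomial `f(x) = ∑_{i=0}^{l_p - 1} F_i x^i` over `ZMod p`. -/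
noncomputable def fibPoly (p : ℕ) : (ZMod p)[X] :=
  ∑ i ∈ Finset.range (pisano p), C (fibMod p i) * X ^ i

/-- Cyclic shift of a vector of length `l`: the shift `v ↦ (v_{l-1}, v_0, …, v_{l-2})`,
which corresponds to multiplication by `x` modulo `x^l - 1` on coefficient vectors. -/
def cyclicShift (p l : ℕ) (v : Fin l → ZMod p) : Fin l → ZMod p :=
  fun i => v ⟨((i : ℕ) + (l - 1)) % l, Nat.mod_lt _ i.pos⟩

/-- The coefficient vector of length `l` of a polynomial. -/
def polyVec (p l : ℕ) (g : (ZMod p)[X]) : Fin l → ZMod p := fun i => g.coeff i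

/-- The cyclic code of length `l` generated by `g`: the ideal generated by the image of `g`
in `F_p[x]/(x^l - 1)`, identified with the subspace of `F_p^l` of coefficient vectors via
`a_0 + a_1 x + ⋯ + a_{l-1} x^{l-1} ↦ (a_0, …, a_{l-1})`; equivalently (since multiplication
by `x` is the cyclic shift), the `F_p`-span of all cyclic shifts of the coefficient vector
of `g`. -/
noncomputable def cyclicCode (p l : ℕ) (g : (ZMod p)[X]) :
    Submodule (ZMod p) (Fin l → ZMod p) :=
  Submodule.span (ZMod p) {w | ∃ k : ℕ, w = (cyclicShift p l)^[k] (polyVec p l g)}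

/-- The cyclic code of length `l` generated by the Fibonacci polynomial `f(x)`. -/
noncomputable def fibCode (p l : ℕ) : Submodule (ZMod p) (Fin l → ZMod p) :=
  cyclicCode p l (fibPoly p)

/-!
Multiplication by `x` is the cyclic shift, which sends the `l_p`-periodic sequence `(F n)` to
`(F (n - 1))`. Since `F (n - 2) = F n - F (n - 1)`, the code is spanned by the coefficient vectors
of `(F n)` and `(F (n - 1))`, which are independent (look at positions `0` and `1`). Every nonzero
codeword is therefore a nonzero Fibonacci-like sequence `u`; from its first zero `i₀` on it equals
`u (i₀ + 1) * F (n - i₀)`, so it has at most `β(p)` zeros in a period, with equality for `f`.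
-/

open Finset

def IsFibLike {R : Type*} [Add R] (u : ℕ → R) : Prop :=
  ∀ n, u (n + 2) = u (n + 1) + u n

namespace IsFibLike

section Add

variable {R : Type*} [Add R] {u : ℕ → R}

theorem periodic (hu : IsFibLike u) {L : ℕ} (h0 : u L = u 0) (h1 : u (L + 1) = u 1) :
    Function.Periodic u L := by
  have key : ∀ n, u (n + L) = u n ∧ u (n + 1 + L) = u (n + 1) := by
    intro n
    induction n with
    | zero => simpa [add_comm] using ⟨h0, h1⟩
    | succ n ih =>
      refine ⟨ih.2, ?_⟩
      rw [show n + 1 + 1 + L = n + L + 2 by omega, hu, show n + L + 1 = n + 1 + L by omega,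
        ih.1, ih.2, hu]
  exact fun n => (key n).1

theorem comp_add_right (hu : IsFibLike u) (k : ℕ) : IsFibLike (fun n => u (n + k)) :=
  fun n => by simpa only [add_right_comm] using hu (n + k)

end Add

section CommRing

variable {R : Type*} [CommRing R] {u w : ℕ → R}

theorem add (hu : IsFibLike u) (hw : IsFibLike w) : IsFibLike (u + w) := fun n => by
  simp only [Pi.add_apply, hu n, hw n]
  abel

theorem const_smul (hu : IsFibLike u) (c : R) : IsFibLike (c • u) := fun n => by
  simp only [Pi.smul_apply, hu n, smul_add]

theorem apply_add_eq_mul_fib (hu : IsFibLike u) {m : ℕ} (h : u m = 0) :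
    ∀ n, u (m + n) = u (m + 1) * Nat.fib n
  | 0 => by simp [h]
  | 1 => by simp
  | n + 2 => by
    rw [← add_assoc, hu, add_assoc, apply_add_eq_mul_fib hu h (n + 1),
      apply_add_eq_mul_fib hu h n, Nat.fib_add_two]
    push_cast
    ring

theorem eq_zero_of_apply_eq_zero (hu : IsFibLike u) {m : ℕ} (h0 : u m = 0)
    (h1 : u (m + 1) = 0) : u = 0 := by
  have backward : ∀ d k, k + d = m → u k = 0 ∧ u (k + 1) = 0 := by
    intro d
    induction d with
    | zero => rintro k rfl; exact ⟨h0, h1⟩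
    | succ d ih =>
      intro k hk
      obtain ⟨hk1, hk2⟩ := ih (k + 1) (by omega)
      refine ⟨?_, hk1⟩
      simpa [hk1, hk2] using (hu k).symm
  funext n
  rcases le_total n m with hnm | hmn
  · exact (backward (m - n) n (by omega)).1
  · simpa [h1, Nat.add_sub_cancel' hmn] using hu.apply_add_eq_mul_fib h0 (n - m)

/-- Two consecutive zeros force `u = 0`, so after the first zero `i₀` of `u` the sequence is
`u (i₀ + 1)` times the Fibonacci sequence; `j ↦ j - i₀` then injects the zeros of `u` into those
of `fib`. -/
theorem card_filter_eq_zero_le [NoZeroDivisors R] [DecidableEq R] (hu : IsFibLike u)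
    (hne : u ≠ 0) (L : ℕ) :
    #{i ∈ range L | u i = 0} ≤ #{i ∈ range L | (Nat.fib i : R) = 0} := by
  set Z := {i ∈ range L | u i = 0}
  rcases Z.eq_empty_or_nonempty with hZ | hZ
  · simp [hZ]
  have hi₀ : u (Z.min' hZ) = 0 := (mem_filter.mp (Z.min'_mem hZ)).2
  have hnext : u (Z.min' hZ + 1) ≠ 0 := fun h => hne (hu.eq_zero_of_apply_eq_zero hi₀ h)
  refine card_le_card_of_injOn (· - Z.min' hZ) (fun j hj => ?_) (fun j hj k hk hjk => ?_)
  · have hle := Z.min'_le j hj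
    obtain ⟨hjL, hj0⟩ := mem_filter.mp hj
    refine mem_filter.mpr ⟨mem_range.mpr ((Nat.sub_le _ _).trans_lt (mem_range.mp hjL)), ?_⟩
    rw [← Nat.add_sub_cancel' hle, hu.apply_add_eq_mul_fib hi₀] at hj0
    exact (mul_eq_zero.mp hj0).resolve_left hnext
  · have := Z.min'_le j hj
    have := Z.min'_le k hk
    simp only at hjk
    omega

end CommRing

end IsFibLike

section Fibonacci

variable {p : ℕ}

theorem isFibLike_fibMod (p : ℕ) : IsFibLike (fibMod p) := fun _ => rfl

theorem fibMod_eq_fib (p : ℕ) : ∀ n, fibMod p n = (Nat.fib n : ZMod p)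
  | 0 => by simp [fibMod]
  | 1 => by simp [fibMod]
  | n + 2 => by
    rw [isFibLike_fibMod p n, fibMod_eq_fib p (n + 1), fibMod_eq_fib p n, Nat.fib_add_two]
    push_cast
    ring

theorem fibMod_pisano (h : 0 < pisano p) :
    fibMod p (pisano p) = 0 ∧ fibMod p (pisano p + 1) = 1 :=
  (Nat.sInf_mem (Nat.nonempty_of_pos_sInf h)).2

theorem periodic_fibMod (h : 0 < pisano p) : Function.Periodic (fibMod p) (pisano p) :=
  (isFibLike_fibMod p).periodic (fibMod_pisano h).1 (fibMod_pisano h).2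

theorem fibMod_pisano_sub_one (h : 0 < pisano p) : fibMod p (pisano p - 1) = 1 := by
  have := isFibLike_fibMod p (pisano p - 1)
  rwa [show pisano p - 1 + 2 = pisano p + 1 by omega, Nat.sub_add_cancel h,
    (fibMod_pisano h).1, (fibMod_pisano h).2, zero_add, eq_comm] at this

theorem one_lt_pisano [Fact (1 < p)] (h : 0 < pisano p) : 1 < pisano p := by
  by_contra h1
  have := (fibMod_pisano h).1
  rw [show pisano p = 1 by omega] at this
  exact one_ne_zero this

end Fibonacci

theorem Submodule.span_iterate_eq_span_pair {R M : Type*} [Semiring R] [AddCommMonoid M]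
    [Module R M] (f : M →ₗ[R] M) (v : M) (h : f (f v) ∈ span R {v, f v}) :
    span R {w | ∃ k : ℕ, w = f^[k] v} = span R {v, f v} := by
  have hinv : span R {v, f v} ≤ (span R {v, f v}).comap f := by
    rw [span_le]
    rintro w (rfl | rfl)
    · exact subset_span (Set.mem_insert_of_mem _ rfl)
    · exact h
  have horbit : ∀ k, f^[k] v ∈ span R {v, f v} := by
    intro k
    induction k with
    | zero => exact subset_span (Set.mem_insert _ _)
    | succ k ih => rw [Function.iterate_succ_apply']; exact hinv ih
  refine le_antisymm (span_le.mpr ?_) (span_le.mpr ?_)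
  · rintro w ⟨k, rfl⟩
    exact horbit k
  · rintro w (rfl | rfl)
    · exact subset_span ⟨0, rfl⟩
    · exact subset_span ⟨1, rfl⟩

theorem hammingNorm_comp_val_add_card {R : Type*} [Zero R] [DecidableEq R] (L : ℕ)
    (u : ℕ → R) : hammingNorm (u ∘ Fin.val : Fin L → R) + #{i ∈ range L | u i = 0} = L := by
  have hzeros : #{i ∈ range L | u i = 0} = #{i : Fin L | u i = 0} := by
    rw [← Nat.Iio_eq_range, ← Fin.map_valEmbedding_univ, filter_map, card_map]
    rfl
  rw [hzeros, hammingNorm, add_comm]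
  simpa using card_filter_add_card_filter_not (s := univ) fun i : Fin L => u i = 0

section Code

variable {p : ℕ}

def cyclicShiftₗ (p l : ℕ) : (Fin l → ZMod p) →ₗ[ZMod p] (Fin l → ZMod p) where
  toFun := cyclicShift p l
  map_add' _ _ := rfl
  map_smul' _ _ := rfl

theorem cyclicShift_comp_val {L : ℕ} {u : ℕ → ZMod p} (hu : Function.Periodic u L) :
    cyclicShift p L (u ∘ Fin.val) = (fun n => u (n + (L - 1))) ∘ Fin.val :=
  funext fun _ => hu.map_mod_nat _

theorem coeff_fibPoly {i : ℕ} (hi : i < pisano p) : (fibPoly p).coeff i = fibMod p i := by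
  simp [fibPoly, hi]

theorem polyVec_fibPoly : polyVec p (pisano p) (fibPoly p) = fibMod p ∘ Fin.val :=
  funext fun i => coeff_fibPoly i.isLt

theorem cyclicCode_eq_span_pair {L : ℕ} {g : (ZMod p)[X]}
    (h : cyclicShift p L (cyclicShift p L (polyVec p L g)) ∈
      Submodule.span (ZMod p) {polyVec p L g, cyclicShift p L (polyVec p L g)}) :
    cyclicCode p L g =
      Submodule.span (ZMod p) {polyVec p L g, cyclicShift p L (polyVec p L g)} :=
  Submodule.span_iterate_eq_span_pair (cyclicShiftₗ p L) _ h

noncomputable def fibModPrev (p : ℕ) (n : ℕ) : ZMod p := fibMod p (n + (pisano p - 1))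

theorem fibModPrev_add_pisano_sub_one (h : 0 < pisano p) (n : ℕ) :
    fibModPrev p (n + (pisano p - 1)) = fibMod p n - fibModPrev p n := by
  have hper := periodic_fibMod h
  have hrec := isFibLike_fibMod p (n + (pisano p - 1) + (pisano p - 1))
  rw [show n + (pisano p - 1) + (pisano p - 1) + 2 = n + pisano p + pisano p by omega,
    show n + (pisano p - 1) + (pisano p - 1) + 1 = n + (pisano p - 1) + pisano p by omega,
    hper, hper, hper] at hrec
  exact eq_sub_of_add_eq' hrec.symm

theorem isFibLike_fibModPrev (p : ℕ) : IsFibLike (fibModPrev p) :=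
  (isFibLike_fibMod p).comp_add_right _

theorem periodic_fibModPrev (h : 0 < pisano p) : Function.Periodic (fibModPrev p) (pisano p) :=
  (periodic_fibMod h).add_const _

theorem fibCode_eq_span_pair (h : 0 < pisano p) :
    fibCode p (pisano p) =
      Submodule.span (ZMod p) {fibMod p ∘ Fin.val, fibModPrev p ∘ Fin.val} := by
  have hshift : cyclicShift p (pisano p) (fibMod p ∘ Fin.val) = fibModPrev p ∘ Fin.val :=
    cyclicShift_comp_val (periodic_fibMod h)
  have hshift₂ : cyclicShift p (pisano p) (fibModPrev p ∘ Fin.val) =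
      fibMod p ∘ Fin.val - fibModPrev p ∘ Fin.val := by
    rw [cyclicShift_comp_val (periodic_fibModPrev h)]
    exact funext fun i => fibModPrev_add_pisano_sub_one h i
  rw [fibCode, cyclicCode_eq_span_pair] <;> rw [polyVec_fibPoly, hshift]
  rw [hshift₂]
  exact sub_mem (Submodule.subset_span (Set.mem_insert _ _))
    (Submodule.subset_span (Set.mem_insert_of_mem _ rfl))

theorem linearIndependent_fibMod_fibModPrev [Fact (1 < p)] (h : 0 < pisano p) :
    LinearIndependent (ZMod p)
      ![(fibMod p ∘ Fin.val : Fin (pisano p) → ZMod p), fibModPrev p ∘ Fin.val] := by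
  refine LinearIndependent.pair_iff.mpr fun s t hst => ⟨?_, ?_⟩
  · simpa [fibMod, fibModPrev, Nat.add_sub_cancel' h, (fibMod_pisano h).1] using
      congrFun hst ⟨1, one_lt_pisano h⟩
  · simpa [fibMod, fibModPrev, fibMod_pisano_sub_one h] using congrFun hst ⟨0, h⟩

theorem finrank_fibCode [Fact p.Prime] (h : 0 < pisano p) :
    Module.finrank (ZMod p) (fibCode p (pisano p)) = 2 := by
  rw [fibCode_eq_span_pair h, ← Matrix.range_cons_cons_empty _ _ ![],
    finrank_span_eq_card (linearIndependent_fibMod_fibModPrev h), Fintype.card_fin]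

theorem isLeast_hammingNorm_fibCode [Fact p.Prime] (h : 0 < pisano p) :
    IsLeast {w : ℕ | ∃ v ∈ fibCode p (pisano p), v ≠ 0 ∧ hammingNorm v = w}
      (pisano p - betaP p) := by
  have hβ : betaP p = #{i ∈ range (pisano p) | (Nat.fib i : ZMod p) = 0} := by
    simp only [betaP, fibMod_eq_fib]
  rw [fibCode_eq_span_pair h]
  constructor
  · refine ⟨fibMod p ∘ Fin.val, Submodule.subset_span (Set.mem_insert _ _), fun h0 => ?_, ?_⟩
    · simpa [fibMod] using congrFun h0 ⟨1, one_lt_pisano h⟩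
    · have := hammingNorm_comp_val_add_card (pisano p) (fibMod p)
      rw [betaP]
      omega
  · rintro _ ⟨v, hv, hv0, rfl⟩
    obtain ⟨a, b, rfl⟩ := Submodule.mem_span_pair.mp hv
    set u := a • fibMod p + b • fibModPrev p
    change u ∘ Fin.val ≠ 0 at hv0
    change pisano p - betaP p ≤ hammingNorm (u ∘ Fin.val)
    have hu : IsFibLike u :=
      ((isFibLike_fibMod p).const_smul a).add ((isFibLike_fibModPrev p).const_smul b)
    have hne : u ≠ 0 := by
      rintro hu0
      exact hv0 (by rw [hu0]; rfl)
    have := hu.card_filter_eq_zero_le hne (pisano p)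
    have := hammingNorm_comp_val_add_card (pisano p) u
    omega

end Code

theorem fibCode_long_general (p : ℕ) [Fact p.Prime]
    (hl : pisano p = 2 * p + 2) :
    Module.finrank (ZMod p) (fibCode p (2 * p + 2)) = 2 ∧
      IsLeast {w : ℕ | ∃ v ∈ fibCode p (2 * p + 2), v ≠ 0 ∧ hammingNorm v = w}
        (2 * p + 2 - betaP p) := by
  have h : 0 < pisano p := by omega
  rw [← hl]
  exact ⟨finrank_fibCode h, isLeast_hammingNorm_fibCode h⟩

/-- For an odd prime `p` with Pisano period `l_p = 2p + 2` and
`β(p) ∈ {2, 4}`, the cyclic code `C = ⟨f(x)⟩` of length `2p + 2` over `F_p` has dimension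
`2` and minimum Hamming distance `2p + 2 - β(p)`, i.e. `C` is a linear code of type
`[2p+2, 2, 2p+2-β(p)]` over `F_p`. -/
theorem fibCode_long (p : ℕ) [Fact p.Prime] (hodd : Odd p)
    (hl : pisano p = 2 * p + 2) (hb : betaP p = 2 ∨ betaP p = 4) :
    Module.finrank (ZMod p) (fibCode p (2 * p + 2)) = 2 ∧
      IsLeast {w : ℕ | ∃ v ∈ fibCode p (2 * p + 2), v ≠ 0 ∧ hammingNorm v = w}
        (2 * p + 2 - betaP p) :=
  fibCode_long_general p hl
end

section
/- Let p be an odd prime with Pisano period l_p = 2p+2 and β(p) = 4, and let C = ⟨f(x)⟩ be the cyclic code of length 2p+2 over F_p generated by the Fibonacci polynomial f(x). Then the weight distribution of C is: A_0 = 1, A_{2p−2} = (p²−1)/2, A_{2p+2} = (p²−1)/2, and A_w = 0 for all other weights w, where A_w denotes the number of codewords of C of Hamming weight w. -/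
/-!
A codeword of `fibCode p L`, `L = pisano p`, is one period of a solution
`n ↦ a F(n+1) + b F(n)` of the Fibonacci recurrence, and `(a, b)` determines it. If a
nonzero solution vanishes at `i₀`, then shifted by `i₀` it is a nonzero multiple of `F`, so
it has exactly `β(p)` zeros per period; otherwise it has none. Counting pairs (codeword,
vanishing coordinate) in two ways, using that every coordinate vanishes on exactly `p`
codewords, gives `β A_{L-β} + L = L p`. For `L = 2p + 2` and `β = 4` this is
`A_{2p-2} = (p² - 1)/2`, and the other nonzero codewords have full weight `2p + 2`.
-/

open Polynomial

open Finset

section Recurrence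

variable {R : Type*} {u v : ℕ → R}

theorem eq_of_fib_recurrence [Add R] (hu : ∀ n, u (n + 2) = u (n + 1) + u n)
    (hv : ∀ n, v (n + 2) = v (n + 1) + v n) (h0 : u 0 = v 0) (h1 : u 1 = v 1) : u = v := by
  funext n
  induction n using Nat.twoStepInduction with
  | zero => exact h0
  | one => exact h1
  | more n ihn ihn1 => rw [hu, hv, ihn, ihn1]

theorem fib_recurrence_init_eq_zero [AddZeroClass R] (hu : ∀ n, u (n + 2) = u (n + 1) + u n)
    {m : ℕ} (hm : u m = 0) (hm1 : u (m + 1) = 0) : u 0 = 0 ∧ u 1 = 0 := by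
  induction m with
  | zero => exact ⟨hm, hm1⟩
  | succ m ih => exact ih (by simpa [hm, hm1] using (hu m).symm) hm

end Recurrence

theorem hammingNorm_add_card_zeros {ι K : Type*} [Fintype ι] [Zero K] [DecidableEq K]
    (v : ι → K) : hammingNorm v + #{i | v i = 0} = Fintype.card ι := by
  rw [hammingNorm, add_comm, card_filter_add_card_filter_not, card_univ]

section LinearCode

variable {K V ι : Type*} [Field K] [Fintype K] [DecidableEq K] [AddCommGroup V] [Module K V]
  [Fintype V] [Fintype ι]

theorem card_filter_eq_zero_mul_card (f : V →ₗ[K] K) (hf : f ≠ 0) :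
    #{x | f x = 0} * Fintype.card K = Fintype.card V := by
  classical
  have hker : Fintype.card (LinearMap.ker f) = #{x | f x = 0} :=
    Fintype.card_of_subtype _ (by simp)
  rw [Module.card_eq_pow_finrank (K := K) (V := V),
    ← Module.Dual.finrank_ker_add_one_of_ne_zero hf, pow_succ, ← hker,
    ← Module.card_eq_pow_finrank]

theorem sum_card_zeros_mul_card (Φ : V →ₗ[K] ι → K) (hΦ : ∀ i, ∃ x, Φ x i ≠ 0) :
    (∑ x, #{i | Φ x i = 0}) * Fintype.card K = Fintype.card ι * Fintype.card V := by
  have hcoord (i : ι) : #{x | Φ x i = 0} * Fintype.card K = Fintype.card V := by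
    obtain ⟨x, hx⟩ := hΦ i
    exact card_filter_eq_zero_mul_card (LinearMap.proj i ∘ₗ Φ) fun h ↦ hx (by
      simpa using LinearMap.congr_fun h x)
  calc (∑ x, #{i | Φ x i = 0}) * Fintype.card K
      = ∑ i, #{x | Φ x i = 0} * Fintype.card K := by
        simp only [card_filter]; rw [sum_comm, sum_mul]
    _ = Fintype.card ι * Fintype.card V := by simp [hcoord]

end LinearCode

section WeightCount

variable {K ι : Type*} [Semiring K] [Fintype ι] [DecidableEq K]

/-- The number `A_w` of codewords of weight `w`. -/
noncomputable def weightCount (C : Submodule K (ι → K)) (w : ℕ) : ℕ :=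
  {v | v ∈ C ∧ hammingNorm v = w}.ncard

theorem weightCount_zero (C : Submodule K (ι → K)) : weightCount C 0 = 1 := by
  have h : {v | v ∈ C ∧ hammingNorm v = 0} = {0} := by
    ext v
    simp only [hammingNorm_eq_zero, Set.mem_ofPred_eq, Set.mem_singleton_iff,
      and_iff_right_iff_imp]
    rintro rfl
    exact C.zero_mem
  rw [weightCount, h, Set.ncard_singleton]

theorem weightCount_range_of_injective {V : Type*} [AddCommMonoid V] [Module K V] [Fintype V]
    {Φ : V →ₗ[K] ι → K} (hΦ : Function.Injective Φ) (w : ℕ) :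
    weightCount (LinearMap.range Φ) w = #{x | hammingNorm (Φ x) = w} := by
  have h : {v | v ∈ LinearMap.range Φ ∧ hammingNorm v = w} =
      Φ '' {x | hammingNorm (Φ x) = w} := by
    ext v
    simp only [LinearMap.mem_range, Set.mem_ofPred_eq, Set.mem_image]
    grind
  rw [weightCount, h, Set.ncard_image_of_injective _ hΦ, ← Set.ncard_coe_finset]
  simp

end WeightCount

section FibMod

variable {p : ℕ}

theorem fibMod_add_two (n : ℕ) : fibMod p (n + 2) = fibMod p (n + 1) + fibMod p n := rfl

theorem periodic_fibMod_pisano (p : ℕ) : Function.Periodic (fibMod p) (pisano p) := by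
  rcases Nat.eq_zero_or_pos (pisano p) with h | h
  · simp [h, Function.Periodic]
  obtain ⟨-, h0, h1⟩ :
      0 < pisano p ∧ fibMod p (pisano p) = 0 ∧ fibMod p (pisano p + 1) = 1 :=
    Nat.sInf_mem (Nat.nonempty_of_pos_sInf h)
  intro n
  refine congrFun (eq_of_fib_recurrence (u := fun n ↦ fibMod p (n + pisano p)) (fun n ↦ ?_)
    fibMod_add_two ?_ ?_) n
  · simp only [add_right_comm n 2, add_right_comm n 1, fibMod_add_two]
  · rw [zero_add]; exact h0
  · rw [add_comm]; exact h1

variable [Fact p.Prime]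

theorem fibMod_succ_ne_zero_of_eq_zero {n : ℕ} (hn : fibMod p n = 0) : fibMod p (n + 1) ≠ 0 :=
  fun hn1 ↦ one_ne_zero (fib_recurrence_init_eq_zero fibMod_add_two hn hn1).2

end FibMod

section FibSol

variable {p L : ℕ}

def fibSol (p : ℕ) (x : ZMod p × ZMod p) (n : ℕ) : ZMod p :=
  x.1 * fibMod p (n + 1) + x.2 * fibMod p n

theorem fibSol_add_two (x : ZMod p × ZMod p) (n : ℕ) :
    fibSol p x (n + 2) = fibSol p x (n + 1) + fibSol p x n := by
  simp only [fibSol, fibMod_add_two]; ring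

@[simp] theorem fibSol_apply_zero (x : ZMod p × ZMod p) : fibSol p x 0 = x.1 := by
  simp [fibSol, fibMod]

@[simp] theorem fibSol_apply_one (x : ZMod p × ZMod p) : fibSol p x 1 = x.1 + x.2 := by
  simp [fibSol, fibMod]

theorem fibSol_zero_one : fibSol p (0, 1) = fibMod p := by
  funext n; simp [fibSol]

theorem periodic_fibSol (hper : Function.Periodic (fibMod p) L) (x : ZMod p × ZMod p) :
    Function.Periodic (fibSol p x) L := fun n ↦ by
  simp only [fibSol, add_right_comm n L 1, hper _]

theorem eq_zero_of_fibSol_eq_zero_of_succ {x : ZMod p × ZMod p} {m : ℕ} (hm : fibSol p x m = 0)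
    (hm1 : fibSol p x (m + 1) = 0) : x = 0 := by
  obtain ⟨h0, h1⟩ := fib_recurrence_init_eq_zero (fibSol_add_two x) hm hm1
  simp only [fibSol_apply_zero, fibSol_apply_one] at h0 h1
  ext <;> simp_all

theorem fibSol_add_of_eq_zero {x : ZMod p × ZMod p} {m : ℕ} (hm : fibSol p x m = 0) (n : ℕ) :
    fibSol p x (m + n) = fibSol p x (m + 1) * fibMod p n := by
  refine congrFun (eq_of_fib_recurrence (u := fun n ↦ fibSol p x (m + n))
    (v := fun n ↦ fibSol p x (m + 1) * fibMod p n) (fun n ↦ ?_) (fun n ↦ ?_) ?_ ?_) n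
  · simp only [← add_assoc, fibSol_add_two]
  · simp only [fibMod_add_two, mul_add]
  · simp [hm, fibMod]
  · simp [fibMod]

theorem fibSol_add_period_sub_one (hper : Function.Periodic (fibMod p) L) (hL : L ≠ 0)
    (x : ZMod p × ZMod p) (n : ℕ) : fibSol p x (n + (L - 1)) = fibSol p (x.2, x.1 - x.2) n := by
  have hx := periodic_fibSol hper x
  refine congrFun (eq_of_fib_recurrence (u := fun n ↦ fibSol p x (n + (L - 1))) (fun n ↦ ?_)
    (fibSol_add_two _) ?_ ?_) n
  · simp only [add_right_comm n 2, add_right_comm n 1, fibSol_add_two]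
  · have h := fibSol_add_two x (L - 1)
    rw [show L - 1 + 2 = 1 + L by omega, show L - 1 + 1 = 0 + L by omega, hx, hx] at h
    simp only [fibSol_apply_zero, fibSol_apply_one] at h ⊢
    rw [zero_add]; linear_combination -h
  · rw [show 1 + (L - 1) = 0 + L by omega, hx]
    simp

end FibSol

section FibWord

variable {p L : ℕ}

def fibWord (p L : ℕ) : (ZMod p × ZMod p) →ₗ[ZMod p] (Fin L → ZMod p) where
  toFun x i := fibSol p x i
  map_add' x y := by ext i; simp only [fibSol, Prod.fst_add, Prod.snd_add, Pi.add_apply]; ring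
  map_smul' c x := by
    ext i; simp only [fibSol, Prod.smul_fst, Prod.smul_snd, smul_eq_mul, RingHom.id_apply,
      Pi.smul_apply]; ring

theorem fibWord_apply (x : ZMod p × ZMod p) (i : Fin L) : fibWord p L x i = fibSol p x i := rfl

theorem polyVec_fibPoly_s13 (hL : pisano p = L) : polyVec p L (fibPoly p) = fibWord p L (0, 1) := by
  ext i
  rw [fibWord_apply, fibSol_zero_one, polyVec, fibPoly, hL, finsetSum_coeff,
    Finset.sum_eq_single (i : ℕ)] <;> simp +contextual [coeff_X_pow, eq_comm]

theorem cyclicShift_fibWord (hper : Function.Periodic (fibMod p) L) [NeZero L]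
    (x : ZMod p × ZMod p) : cyclicShift p L (fibWord p L x) = fibWord p L (x.2, x.1 - x.2) := by
  ext i
  simp only [cyclicShift, fibWord_apply, (periodic_fibSol hper x).map_mod_nat,
    fibSol_add_period_sub_one hper (NeZero.ne L)]

theorem fibCode_eq_range (hL : pisano p = L) [NeZero L] :
    fibCode p L = LinearMap.range (fibWord p L) := by
  have hper : Function.Periodic (fibMod p) L := hL ▸ periodic_fibMod_pisano p
  apply le_antisymm
  · refine Submodule.span_le.2 ?_
    rintro _ ⟨k, rfl⟩
    induction k with
    | zero => exact ⟨(0, 1), (polyVec_fibPoly_s13 hL).symm⟩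
    | succ k ih =>
      obtain ⟨x, hx⟩ := ih
      exact ⟨_, by rw [Function.iterate_succ_apply', ← hx, cyclicShift_fibWord hper]⟩
  · rintro _ ⟨⟨a, b⟩, rfl⟩
    have hg : polyVec p L (fibPoly p) ∈ fibCode p L := Submodule.subset_span ⟨0, rfl⟩
    have hg1 : cyclicShift p L (polyVec p L (fibPoly p)) ∈ fibCode p L :=
      Submodule.subset_span ⟨1, rfl⟩
    rw [polyVec_fibPoly_s13 hL] at hg hg1
    rw [cyclicShift_fibWord hper] at hg1
    -- `(0, 1)` gives the generator and `(1, -1)` its cyclic shift.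
    have hab : ((a, b) : ZMod p × ZMod p) = a • (1, -1) + (a + b) • (0, 1) := by
      ext <;> simp
    rw [hab, map_add, map_smul, map_smul]
    exact add_mem (Submodule.smul_mem _ _ (by simpa using hg1)) (Submodule.smul_mem _ _ hg)

theorem fibWord_injective (hL : 2 ≤ L) : Function.Injective (fibWord p L) := by
  rw [← LinearMap.ker_eq_bot, LinearMap.ker_eq_bot']
  intro x hx
  refine eq_zero_of_fibSol_eq_zero_of_succ (m := 0) ?_ ?_
  · exact congrFun hx ⟨0, by omega⟩
  · exact congrFun hx ⟨1, by omega⟩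

end FibWord

section Zeros

variable {p L : ℕ}

theorem card_zeros_fibWord_zero_one :
    #{i : Fin L | fibWord p L (0, 1) i = 0} = #{i ∈ range L | fibMod p i = 0} := by
  rw [← Nat.Iio_eq_range, ← Fin.map_valEmbedding_univ, filter_map, card_map]
  simp [fibWord_apply, fibSol_zero_one]

theorem card_zeros_fibWord_of_eq_zero [Fact p.Prime] [NeZero L]
    (hper : Function.Periodic (fibMod p) L) {x : ZMod p × ZMod p} (hx : x ≠ 0) {i₀ : Fin L}
    (hi₀ : fibWord p L x i₀ = 0) :
    #{i | fibWord p L x i = 0} = #{i | fibWord p L (0, 1) i = 0} := by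
  have hc : fibSol p x (i₀ + 1) ≠ 0 := fun h ↦ hx (eq_zero_of_fibSol_eq_zero_of_succ hi₀ h)
  -- Read from `i₀` on, the word is `fibSol p x (i₀ + 1) • F` with a nonzero scalar.
  refine (Finset.card_equiv (Equiv.addLeft i₀) fun j ↦ ?_).symm
  simp only [mem_filter, mem_univ, true_and, Equiv.coe_addLeft]
  rw [fibWord_apply, fibWord_apply, fibSol_zero_one, Fin.val_add,
    (periodic_fibSol hper x).map_mod_nat, fibSol_add_of_eq_zero hi₀, mul_eq_zero_iff_left hc]

end Zeros

section WeightDistribution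

variable {p L : ℕ} [Fact p.Prime]

theorem exists_fibWord_apply_ne_zero (i : Fin L) : ∃ x, fibWord p L x i ≠ 0 := by
  by_cases hi : fibMod p i = 0
  · exact ⟨(1, 0), by simpa [fibWord_apply, fibSol] using fibMod_succ_ne_zero_of_eq_zero hi⟩
  · exact ⟨(0, 1), by simpa [fibWord_apply, fibSol_zero_one] using hi⟩

theorem sum_card_zeros_fibWord : ∑ x, #{i | fibWord p L x i = 0} = L * p := by
  have h := sum_card_zeros_mul_card (fibWord p L) exists_fibWord_apply_ne_zero
  simp only [ZMod.card, Fintype.card_fin, Fintype.card_prod] at h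
  exact Nat.eq_of_mul_eq_mul_right (Fact.out : p.Prime).pos (by rw [h]; ring)

theorem card_zeros_mul_card_vanishing_add (hper : Function.Periodic (fibMod p) L) [NeZero L] :
    #{i | fibWord p L (0, 1) i = 0} *
      #{x ∈ univ.erase 0 | ∃ i, fibWord p L x i = 0} + L = L * p := by
  -- In `∑ x, #zeros`, `x = 0` contributes `L`, every other vanishing `x` contributes `β`.
  rw [← sum_card_zeros_fibWord (p := p) (L := L), ← add_sum_erase _ _ (mem_univ 0), add_comm,
    map_zero, ← sum_filter_of_ne (p := fun x ↦ ∃ i, fibWord p L x i = 0)]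
  · simp only [Pi.zero_apply, filter_true, card_univ, Fintype.card_fin, add_right_inj]
    rw [mul_comm, ← smul_eq_mul, ← sum_const]
    refine sum_congr rfl fun x hx ↦ ?_
    obtain ⟨hx0, i, hi⟩ := by simpa using hx
    exact (card_zeros_fibWord_of_eq_zero hper hx0 hi).symm
  · intro x _ hx
    obtain ⟨i, hi⟩ := card_pos.1 (Nat.pos_of_ne_zero hx)
    exact ⟨i, (mem_filter.1 hi).2⟩

theorem hammingNorm_fibWord (hper : Function.Periodic (fibMod p) L) [NeZero L]
    (x : ZMod p × ZMod p) :
    hammingNorm (fibWord p L x) = if x = 0 then 0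
      else if ∃ i, fibWord p L x i = 0 then L - #{i | fibWord p L (0, 1) i = 0} else L := by
  have hsum := hammingNorm_add_card_zeros (fibWord p L x)
  rw [Fintype.card_fin] at hsum
  split_ifs with hx hz
  · simp [hx]
  · obtain ⟨i, hi⟩ := hz
    rw [card_zeros_fibWord_of_eq_zero hper hx hi] at hsum
    omega
  · rw [card_eq_zero.2 (filter_false_of_mem fun i _ hi ↦ hz ⟨i, hi⟩)] at hsum
    omega

theorem weightCount_fibCode (hL : pisano p = L) (h2 : 2 ≤ L) :
    betaP p * weightCount (fibCode p L) (L - betaP p) + L = L * p ∧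
      weightCount (fibCode p L) (L - betaP p) + weightCount (fibCode p L) L + 1 = p ^ 2 ∧
      ∀ w, w ≠ 0 → w ≠ L - betaP p → w ≠ L → weightCount (fibCode p L) w = 0 := by
  have : NeZero L := ⟨by omega⟩
  have hper : Function.Periodic (fibMod p) L := hL ▸ periodic_fibMod_pisano p
  have hβ : betaP p = #{i | fibWord p L (0, 1) i = 0} := by
    rw [card_zeros_fibWord_zero_one, betaP, hL]
  have hβ0 : 0 < betaP p := by
    rw [hβ]; exact card_pos.2 ⟨0, by simp [fibWord_apply, fibSol_zero_one, fibMod]⟩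
  have hβL : betaP p < L := by
    have h1 : ({i | fibWord p L (0, 1) i = 0} : Finset (Fin L)) ⊂ univ :=
      filter_ssubset.2 ⟨⟨1, h2⟩, mem_univ _, by simp [fibWord_apply, fibSol, fibMod]⟩
    simpa [hβ] using card_lt_card h1
  simp only [fibCode_eq_range hL, weightCount_range_of_injective (fibWord_injective (p := p) h2),
    hammingNorm_fibWord hper, ← hβ]
  have hvanishing :
      #{x | (if x = 0 then 0 else if ∃ i, fibWord p L x i = 0 then L - betaP p else L)
        = L - betaP p} = #{x ∈ univ.erase 0 | ∃ i, fibWord p L x i = 0} := by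
    congr 1; ext x
    simp only [mem_filter, mem_univ, true_and, mem_erase]
    split_ifs <;> grind
  have hfull :
      #{x | (if x = 0 then 0 else if ∃ i, fibWord p L x i = 0 then L - betaP p else L)
        = L} = #{x ∈ univ.erase 0 | ¬∃ i, fibWord p L x i = 0} := by
    congr 1; ext x
    simp only [mem_filter, mem_univ, true_and, mem_erase]
    split_ifs <;> grind
  refine ⟨?_, ?_, fun w hw0 hwβ hwL ↦ ?_⟩
  · rw [hvanishing, hβ]; exact card_zeros_mul_card_vanishing_add hper
  · rw [hvanishing, hfull, card_filter_add_card_filter_not, card_erase_of_mem (mem_univ _),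
      card_univ, Fintype.card_prod, ZMod.card]
    have := (Fact.out : p.Prime).pos
    rw [sq, Nat.sub_add_cancel (Nat.mul_pos this this)]
  · refine card_eq_zero.2 (filter_false_of_mem fun x _ ↦ ?_)
    split_ifs <;> omega

end WeightDistribution

theorem fibCode_weight_distribution_long_beta_four_general (p : ℕ) [Fact p.Prime]
    (hl : pisano p = 2 * p + 2) (hb : betaP p = 4) :
    Set.ncard {v | v ∈ fibCode p (2 * p + 2) ∧ hammingNorm v = 0} = 1 ∧
      Set.ncard {v | v ∈ fibCode p (2 * p + 2) ∧ hammingNorm v = 2 * p - 2}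
        = (p ^ 2 - 1) / 2 ∧
      Set.ncard {v | v ∈ fibCode p (2 * p + 2) ∧ hammingNorm v = 2 * p + 2}
        = (p ^ 2 - 1) / 2 ∧
      ∀ w : ℕ, w ≠ 0 → w ≠ 2 * p - 2 → w ≠ 2 * p + 2 →
        Set.ncard {v | v ∈ fibCode p (2 * p + 2) ∧ hammingNorm v = w} = 0 := by
  have hp := (Fact.out : p.Prime).two_le
  obtain ⟨hcount, hsum, hzero⟩ := weightCount_fibCode hl (by omega)
  rw [hb, show 2 * p + 2 - 4 = 2 * p - 2 by omega] at hcount hsum hzero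
  have hsq : 2 * weightCount (fibCode p (2 * p + 2)) (2 * p - 2) + 1 = p ^ 2 := by nlinarith
  refine ⟨weightCount_zero _, ?_, ?_, hzero⟩
  · change weightCount _ _ = _
    omega
  · change weightCount _ _ = _
    omega

/-- Weight distribution for `l_p = 2p + 2`, `β(p) = 4`:
`A_0 = 1`, `A_{2p-2} = (p²-1)/2`, `A_{2p+2} = (p²-1)/2`, and `A_w = 0` otherwise. -/
theorem fibCode_weight_distribution_long_beta_four (p : ℕ) [Fact p.Prime] (hodd : Odd p)
    (hl : pisano p = 2 * p + 2) (hb : betaP p = 4) :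
    Set.ncard {v | v ∈ fibCode p (2 * p + 2) ∧ hammingNorm v = 0} = 1 ∧
      Set.ncard {v | v ∈ fibCode p (2 * p + 2) ∧ hammingNorm v = 2 * p - 2}
        = (p ^ 2 - 1) / 2 ∧
      Set.ncard {v | v ∈ fibCode p (2 * p + 2) ∧ hammingNorm v = 2 * p + 2}
        = (p ^ 2 - 1) / 2 ∧
      ∀ w : ℕ, w ≠ 0 → w ≠ 2 * p - 2 → w ≠ 2 * p + 2 →
        Set.ncard {v | v ∈ fibCode p (2 * p + 2) ∧ hammingNorm v = w} = 0 :=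
  fibCode_weight_distribution_long_beta_four_general p hl hb
end
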